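/- Let F : X × Y → ℝ ∪ {+∞} be such that dom F(·, 0_Y) ≠ ∅ and set p := F(·, 0_Y). Then for each x* ∈ X*, the fundamental perturbational duality formula inf_{x∈X} {F(x, 0_Y) − ⟨x*, x⟩} = sup_{y*∈Y*} −F*(x*, y*) holds if and only if (M^ε p)(x*) = 𝒜^ε(x*) for all ε ≥ 0, and also if and only if there exists ε̄ > 0 with (M^ε p)(x*) = 𝒜^ε(x*) for all ε ∈ (0, ε̄), where 𝒜^ε(x*) := ⋂_{η>0} ⋃_{y*∈Y*} {x ∈ X : (x, 0_Y) ∈ (M^{ε+η}F)(x*, y*)}. -/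

import Mathlib

/-!
Write `h x := F (x, 0) - ⟨x*, x⟩`, `α := inf h` and `β := sup_{y*} -F*(x*, y*)`; weak duality
gives `β ≤ α`. Both sets in question are sublevel sets of `h` restricted to the points where `h`
is finite: `(M^ε p)(x*) = {x | h x ∈ ℝ, h x ≤ α + ε}`, and since `(x, 0)` is an
`(ε + η)`-minimizer of `F - (x*, y*)` exactly when `h x ≤ -F*(x*, y*) + ε + η`, letting `η ↓ 0`
gives `𝒜^ε(x*) = {x | h x ∈ ℝ, h x ≤ β + ε}`. So `α = β` makes the two sets equal for every `ε`.
Conversely, `α < +∞` because `dom p ≠ ∅`, and when `α` is finite any `ε`-minimizer of `h` lies in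
`𝒜^ε(x*)` for small `ε > 0`, which gives `α ≤ β + ε`.
-/

noncomputable section

namespace RobustDuality

/-- The set of `ε`-minimizers of an extended-real-valued function `h`:
`{z | h z ∈ ℝ ∧ h z ≤ inf h + ε}` (empty when `inf h ∉ ℝ`). -/
def epsArgmin {Z : Type*} (h : Z → EReal) (ε : ℝ) : Set Z :=
  {z | (∃ r : ℝ, h z = (r : EReal)) ∧ h z ≤ (⨅ w, h w) + (ε : EReal)}

variable {X : Type*} [AddCommGroup X] [Module ℝ X] [TopologicalSpace X]
  [IsTopologicalAddGroup X] [ContinuousSMul ℝ X] [LocallyConvexSpace ℝ X] [T2Space X]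
  {Y : Type*} [AddCommGroup Y] [Module ℝ Y] [TopologicalSpace Y]
  [IsTopologicalAddGroup Y] [ContinuousSMul ℝ Y] [LocallyConvexSpace ℝ Y] [T2Space Y]

/-- `(M^ε h)(x*) := ε-argmin (h - x*)` for `h : X → EReal` and `x* ∈ X*`. -/
def M1 (h : X → EReal) (ε : ℝ) (xs : X →L[ℝ] ℝ) : Set X :=
  epsArgmin (fun x => h x - ((xs x : ℝ) : EReal)) ε

/-- Fenchel conjugate of `F : X × Y → EReal` at `(x*, y*)`. -/
def conj2 (F : X × Y → EReal) (xs : X →L[ℝ] ℝ) (ys : Y →L[ℝ] ℝ) : EReal :=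
  ⨆ z : X × Y, ((xs z.1 + ys z.2 : ℝ) : EReal) - F z

/-- `(M^ε F)(x*, y*) := ε-argmin (F - (x*, y*))`. -/
def M2 (F : X × Y → EReal) (ε : ℝ) (xs : X →L[ℝ] ℝ) (ys : Y →L[ℝ] ℝ) : Set (X × Y) :=
  epsArgmin (fun z => F z - ((xs z.1 + ys z.2 : ℝ) : EReal)) ε

/-- `𝒜^ε(x*) := ⋂_{η>0} ⋃_{y*} {x : (x, 0) ∈ (M^{ε+η}F)(x*, y*)}`. -/
def calA1 (F : X × Y → EReal) (ε : ℝ) (xs : X →L[ℝ] ℝ) : Set X :=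
  ⋂ (η : ℝ) (_ : 0 < η),
    ⋃ ys : Y →L[ℝ] ℝ, {x : X | (x, (0 : Y)) ∈ M2 F (ε + η) xs ys}

theorem EReal.le_of_forall_pos_le_add {a b : EReal} (h : ∀ η : ℝ, 0 < η → a ≤ b + η) :
    a ≤ b := by
  induction b using EReal.rec with
  | bot => simpa using h 1 one_pos
  | coe r =>
    refine EReal.le_of_forall_lt_iff_le.1 fun z hz => ?_
    have hη : 0 < z - r := sub_pos.2 (EReal.coe_lt_coe_iff.1 hz)
    calc a ≤ r + ((z - r : ℝ) : EReal) := h (z - r) hη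
      _ = z := by rw [← EReal.coe_add, add_sub_cancel]
  | top => exact le_top

theorem EReal.neg_iSup {ι : Sort*} (f : ι → EReal) : -(⨆ i, f i) = ⨅ i, -f i :=
  EReal.negOrderIso.map_iSup f

section RealSublevel

variable {Z : Type*} (h : Z → EReal)

def realSublevel (c : EReal) : Set Z :=
  {z | (∃ r : ℝ, h z = r) ∧ h z ≤ c}

theorem epsArgmin_eq_realSublevel (ε : ℝ) :
    epsArgmin h ε = realSublevel h ((⨅ z, h z) + ε) :=
  rfl

theorem iInter_iUnion_realSublevel {ι : Type*} (φ : ι → EReal) (ε : ℝ) :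
    ⋂ (η : ℝ) (_ : 0 < η), ⋃ i, realSublevel h (φ i + ((ε + η : ℝ) : EReal)) =
      realSublevel h ((⨆ i, φ i) + ε) := by
  ext z
  simp only [realSublevel, Set.mem_iInter, Set.mem_iUnion]
  constructor
  · intro hz
    obtain ⟨i, hreal, -⟩ := hz 1 one_pos
    refine ⟨hreal, EReal.le_of_forall_pos_le_add fun η hη => ?_⟩
    obtain ⟨i, -, hi⟩ := hz η hη
    calc h z ≤ φ i + ((ε + η : ℝ) : EReal) := hi
      _ ≤ (⨆ i, φ i) + ((ε + η : ℝ) : EReal) := by gcongr; exact le_iSup φ i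
      _ = (⨆ i, φ i) + ε + η := by rw [EReal.coe_add, add_assoc]
  · rintro ⟨⟨r, hr⟩, hle⟩ η hη
    have hlt : ((r - (ε + η) : ℝ) : EReal) < ⨆ i, φ i := by
      calc ((r - (ε + η) : ℝ) : EReal) < ((r - ε : ℝ) : EReal) := by
            exact_mod_cast sub_lt_sub_left (lt_add_of_pos_right ε hη) r
        _ ≤ ⨆ i, φ i := EReal.sub_le_of_le_add (hr ▸ hle)
    obtain ⟨i, hi⟩ := lt_iSup_iff.1 hlt
    refine ⟨i, ⟨r, hr⟩, ?_⟩
    calc h z = ((r - (ε + η) : ℝ) : EReal) + ((ε + η : ℝ) : EReal) := by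
          rw [hr, ← EReal.coe_add, sub_add_cancel]
      _ ≤ φ i + ((ε + η : ℝ) : EReal) := by gcongr

theorem exists_mem_realSublevel_iInf_add (hbot : ⨅ z, h z ≠ ⊥) (htop : ⨅ z, h z ≠ ⊤)
    {ε : ℝ} (hε : 0 < ε) : ∃ z, z ∈ realSublevel h ((⨅ z, h z) + ε) := by
  have hlt : ⨅ z, h z < (⨅ z, h z) + ε := by
    lift ⨅ z, h z to ℝ using ⟨htop, hbot⟩ with a
    exact_mod_cast lt_add_of_pos_right a hε
  obtain ⟨z, hz⟩ := iInf_lt_iff.1 hlt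
  have hz_bot : h z ≠ ⊥ := ne_bot_of_le_ne_bot hbot (iInf_le h z)
  exact ⟨z, ⟨(h z).toReal, (EReal.coe_toReal hz.ne_top hz_bot).symm⟩, hz.le⟩

theorem iInf_le_of_realSublevel_subset {β : EReal} {εbar : ℝ} (hεbar : 0 < εbar)
    (htop : ⨅ z, h z ≠ ⊤)
    (hsub : ∀ ε : ℝ, 0 < ε → ε < εbar →
      realSublevel h ((⨅ z, h z) + ε) ⊆ realSublevel h (β + ε)) :
    ⨅ z, h z ≤ β := by
  by_cases hbot : ⨅ z, h z = ⊥
  · exact hbot ▸ bot_le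
  refine EReal.le_of_forall_pos_le_add fun η hη => ?_
  set ε := min η (εbar / 2)
  have hε : 0 < ε := lt_min hη (half_pos hεbar)
  obtain ⟨z, hz⟩ := exists_mem_realSublevel_iInf_add h hbot htop hε
  calc ⨅ z, h z ≤ h z := iInf_le h z
    _ ≤ β + ε := (hsub ε hε ((min_le_right _ _).trans_lt (half_lt_self hεbar)) hz).2
    _ ≤ β + η := by gcongr; exact_mod_cast min_le_left η (εbar / 2)

theorem tfae_iInf_eq_iSup_iff_realSublevel_eq {ι : Type*} (φ : ι → EReal)
    (hweak : ∀ i, φ i ≤ ⨅ z, h z) (htop : ⨅ z, h z ≠ ⊤) :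
    List.TFAE
      [⨅ z, h z = ⨆ i, φ i,
       ∀ ε : ℝ, 0 ≤ ε → realSublevel h ((⨅ z, h z) + ε) = realSublevel h ((⨆ i, φ i) + ε),
       ∃ εbar : ℝ, 0 < εbar ∧ ∀ ε : ℝ, 0 < ε → ε < εbar →
         realSublevel h ((⨅ z, h z) + ε) = realSublevel h ((⨆ i, φ i) + ε)] := by
  tfae_have 1 → 2 := fun hdual ε _ => by rw [hdual]
  tfae_have 2 → 3 := fun heq => ⟨1, one_pos, fun ε hε _ => heq ε hε.le⟩
  tfae_have 3 → 1 := by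
    rintro ⟨εbar, hεbar, heq⟩
    exact le_antisymm
      (iInf_le_of_realSublevel_subset h hεbar htop fun ε hε hεlt => (heq ε hε hεlt).le)
      (iSup_le hweak)
  tfae_finish

end RealSublevel

section Perturbation

variable {X Y : Type*} [AddCommGroup X] [Module ℝ X] [TopologicalSpace X]
  [AddCommGroup Y] [Module ℝ Y] [TopologicalSpace Y]

theorem neg_conj2 (F : X × Y → EReal) (xs : X →L[ℝ] ℝ) (ys : Y →L[ℝ] ℝ) :
    -conj2 F xs ys = ⨅ z : X × Y, F z - ((xs z.1 + ys z.2 : ℝ) : EReal) := by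
  rw [conj2, EReal.neg_iSup]
  refine iInf_congr fun z => ?_
  rw [EReal.neg_sub (.inl (EReal.coe_ne_bot _)) (.inl (EReal.coe_ne_top _)), add_comm]
  rfl

theorem neg_conj2_le_iInf (F : X × Y → EReal) (xs : X →L[ℝ] ℝ) (ys : Y →L[ℝ] ℝ) :
    -conj2 F xs ys ≤ ⨅ x : X, F (x, (0 : Y)) - ((xs x : ℝ) : EReal) := by
  rw [neg_conj2]
  exact le_iInf fun x => iInf_le_of_le (x, 0) (by simp)

theorem mk_zero_mem_M2_iff (F : X × Y → EReal) (δ : ℝ) (xs : X →L[ℝ] ℝ) (ys : Y →L[ℝ] ℝ)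
    (x : X) :
    (x, (0 : Y)) ∈ M2 F δ xs ys ↔
      x ∈ realSublevel (fun x => F (x, (0 : Y)) - ((xs x : ℝ) : EReal)) (-conj2 F xs ys + δ) := by
  simp [M2, epsArgmin, realSublevel, neg_conj2]

theorem calA1_eq_realSublevel (F : X × Y → EReal) (ε : ℝ) (xs : X →L[ℝ] ℝ) :
    calA1 F ε xs = realSublevel (fun x => F (x, (0 : Y)) - ((xs x : ℝ) : EReal))
      ((⨆ ys : Y →L[ℝ] ℝ, -conj2 F xs ys) + ε) := by
  rw [← iInter_iUnion_realSublevel]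
  simp only [calA1, mk_zero_mem_M2_iff, Set.ofPred_mem_eq]

end Perturbation

theorem perturbational_duality_iff_M_eq_calA_general
    (F : X × Y → EReal)
    (hdom : ∃ x : X, F (x, (0 : Y)) ≠ ⊤) (xs : X →L[ℝ] ℝ) :
    List.TFAE
      [(⨅ x : X, (F (x, (0 : Y)) - ((xs x : ℝ) : EReal))) =
         ⨆ ys : Y →L[ℝ] ℝ, -conj2 F xs ys,
       ∀ ε : ℝ, 0 ≤ ε → M1 (fun x => F (x, (0 : Y))) ε xs = calA1 F ε xs,
       ∃ εbar : ℝ, 0 < εbar ∧ ∀ ε : ℝ, 0 < ε → ε < εbar →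
         M1 (fun x => F (x, (0 : Y))) ε xs = calA1 F ε xs] := by
  obtain ⟨x₀, hx₀⟩ := hdom
  have htop : ⨅ x : X, F (x, (0 : Y)) - ((xs x : ℝ) : EReal) ≠ ⊤ :=
    ne_top_of_le_ne_top (EReal.add_lt_top hx₀ (by simp)).ne (iInf_le _ x₀)
  simp only [M1, epsArgmin_eq_realSublevel, calA1_eq_realSublevel]
  exact tfae_iInf_eq_iSup_iff_realSublevel_eq _ _ (neg_conj2_le_iInf F xs) htop

/-- Corollary 3.1 (robust duality for Case 1: no uncertainty). -/
theorem perturbational_duality_iff_M_eq_calA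
    (F : X × Y → EReal) (hF : ∀ z, F z ≠ ⊥)
    (hdom : ∃ x : X, F (x, (0 : Y)) ≠ ⊤) (xs : X →L[ℝ] ℝ) :
    List.TFAE
      [(⨅ x : X, (F (x, (0 : Y)) - ((xs x : ℝ) : EReal))) =
         ⨆ ys : Y →L[ℝ] ℝ, -conj2 F xs ys,
       ∀ ε : ℝ, 0 ≤ ε → M1 (fun x => F (x, (0 : Y))) ε xs = calA1 F ε xs,
       ∃ εbar : ℝ, 0 < εbar ∧ ∀ ε : ℝ, 0 < ε → ε < εbar →
         M1 (fun x => F (x, (0 : Y))) ε xs = calA1 F ε xs] :=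
  perturbational_duality_iff_M_eq_calA_general F hdom xs

end RobustDuality
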